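/- In the grid-neutral optimal solution, any RAU k with interior power 0 < p_k* < p_max satisfies κ_L ≤ √(p_k*)/γ_k ≤ κ_G, where κ_G = (∑_i √(p_i*) γ_i)/(μη) and κ_L = η² κ_G. Consequently, a grid-passive RAU (C_k = D_k = 0, hence p_k* = E_k) satisfies γ_k² κ_L² ≤ E_k ≤ γ_k² κ_G². -/

import Mathlib

/-!
Moving power from one interior RAU `j` to another interior RAU `k` along the grid-neutrality
constraint cannot increase `∑ √pᵢ γᵢ` at the optimum. Near `p` each grid term is linear in
`pᵢ` with a one-sided slope in `[η, 1/η]`, so lowering `p_j` by `s` can be compensated by raising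
`p_k` by `c s` with `c ≥ η²`. First-order optimality along this exchange gives
`η² √p_j / γ_j ≤ √p_k / γ_k` for all interior `j, k`; taking `κ_G` to be the largest ratio
`√p_k / γ_k` over interior RAUs determines `μ`.
-/

open Finset Filter Topology Function

/-- The grid term `S_i` of the neutrality constraint `∑ S_i = 0`. -/
noncomputable def gridExchange (η e t : ℝ) : ℝ := η * max (e - t) 0 - max (t - e) 0 / η

lemma self_le_inv_of_le_one₀ {η : ℝ} (hη : 0 < η) (hη1 : η ≤ 1) : η ≤ η⁻¹ :=
  hη1.trans ((one_le_inv₀ hη).2 hη1)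

lemma gridExchange_sub_eventuallyEq {η : ℝ} (hη : 0 < η) (hη1 : η ≤ 1) (e t : ℝ) :
    ∃ a, η ≤ a ∧ ∀ᶠ s in 𝓝[≥] 0, gridExchange η e (t - s) = gridExchange η e t + a * s := by
  rcases le_or_gt t e with h | h
  · refine ⟨η, le_rfl, eventually_nhdsWithin_of_forall fun s (hs : 0 ≤ s) => ?_⟩
    rw [gridExchange, gridExchange, max_eq_left (by linarith), max_eq_right (by linarith),
      max_eq_left (by linarith), max_eq_right (by linarith)]
    ring
  · refine ⟨η⁻¹, self_le_inv_of_le_one₀ hη hη1, ?_⟩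
    filter_upwards [Ico_mem_nhdsGE (sub_pos.2 h)] with s ⟨hs0, hs⟩
    rw [gridExchange, gridExchange, max_eq_right (by linarith), max_eq_left (by linarith),
      max_eq_right (by linarith), max_eq_left (by linarith)]
    field_simp
    ring

lemma gridExchange_add_eventuallyEq {η : ℝ} (hη : 0 < η) (hη1 : η ≤ 1) (e t : ℝ) :
    ∃ b, 0 < b ∧ b ≤ η⁻¹ ∧
      ∀ᶠ s in 𝓝[≥] 0, gridExchange η e (t + s) = gridExchange η e t - b * s := by
  rcases lt_or_ge t e with h | h
  · refine ⟨η, hη, self_le_inv_of_le_one₀ hη hη1, ?_⟩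
    filter_upwards [Ico_mem_nhdsGE (sub_pos.2 h)] with s ⟨hs0, hs⟩
    rw [gridExchange, gridExchange, max_eq_left (by linarith), max_eq_right (by linarith),
      max_eq_left (by linarith), max_eq_right (by linarith)]
    ring
  · refine ⟨η⁻¹, inv_pos.2 hη, le_rfl, eventually_nhdsWithin_of_forall fun s (hs : 0 ≤ s) => ?_⟩
    rw [gridExchange, gridExchange, max_eq_right (by linarith), max_eq_left (by linarith),
      max_eq_right (by linarith), max_eq_left (by linarith)]
    field_simp
    ring

section

variable {ι : Type*} [Fintype ι]

def feasibleSet (pmax η : ℝ) (E : ι → ℝ) : Set (ι → ℝ) :=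
  {q | (∀ i, 0 ≤ q i ∧ q i ≤ pmax) ∧ ∑ i, gridExchange η (E i) (q i) = 0}

noncomputable def weightedSqrtSum (γ q : ι → ℝ) : ℝ := ∑ i, √(q i) * γ i

lemma weightedSqrtSum_nonneg {γ : ι → ℝ} (hγ : ∀ i, 0 ≤ γ i) (q : ι → ℝ) :
    0 ≤ weightedSqrtSum γ q :=
  sum_nonneg fun i _ => mul_nonneg (Real.sqrt_nonneg _) (hγ i)

variable [DecidableEq ι]

lemma sum_apply_update {β M : Type*} [AddCommGroup M] (F : ι → β → M) (p : ι → β) (j : ι)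
    (x : β) : ∑ i, F i (update p j x i) = ∑ i, F i (p i) + (F j x - F j (p j)) := by
  simp_rw [apply_update F]
  rw [sum_update_of_mem (mem_univ j), sum_eq_add_sum_sdiff_singleton_of_mem (mem_univ j)]
  abel

lemma sum_apply_update_update {β M : Type*} [AddCommGroup M] (F : ι → β → M) (p : ι → β)
    {j k : ι} (hjk : j ≠ k) (x y : β) :
    ∑ i, F i (update (update p j x) k y i) =
      ∑ i, F i (p i) + (F j x - F j (p j)) + (F k y - F k (p k)) := by
  rw [sum_apply_update, sum_apply_update, update_of_ne hjk.symm]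

variable {pmax η : ℝ} {γ E p : ι → ℝ} {j k : ι}

lemma eventually_exchange_mem_feasibleSet (hη : 0 < η) (hη1 : η ≤ 1)
    (hp : p ∈ feasibleSet pmax η E) (hjk : j ≠ k) (hj : 0 < p j) (hk : p k < pmax) :
    ∃ c, η ^ 2 ≤ c ∧ ∀ᶠ s in 𝓝[≥] 0,
      update (update p j (p j - s)) k (p k + c * s) ∈ feasibleSet pmax η E := by
  obtain ⟨a, ha, hja⟩ := gridExchange_sub_eventuallyEq hη hη1 (E j) (p j)
  obtain ⟨b, hb, hbη, hkb⟩ := gridExchange_add_eventuallyEq hη hη1 (E k) (p k)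
  -- with `c = a / b`, lowering `p j` by `s` and raising `p k` by `c * s` cancel in the constraint
  have hc : η ^ 2 ≤ a / b := by
    rw [le_div_iff₀ hb]
    calc η ^ 2 * b ≤ η ^ 2 * η⁻¹ := by gcongr
      _ = η := by field_simp
      _ ≤ a := ha
  have hc0 : 0 ≤ a / b := (sq_nonneg η).trans hc
  refine ⟨a / b, hc, ?_⟩
  have hscale : Tendsto (fun s => a / b * s) (𝓝[≥] 0) (𝓝[≥] 0) := by
    refine tendsto_nhdsWithin_iff.2
      ⟨?_, eventually_nhdsWithin_of_forall fun s (hs : 0 ≤ s) => mul_nonneg hc0 hs⟩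
    simpa using ((continuous_const_mul (a / b)).tendsto 0).mono_left nhdsWithin_le_nhds
  have hj' : ∀ᶠ s in 𝓝[≥] 0, s < p j := (eventually_lt_nhds hj).filter_mono nhdsWithin_le_nhds
  have hk' : ∀ᶠ s in 𝓝[≥] (0 : ℝ), p k + a / b * s < pmax := by
    refine (((continuous_const.add (continuous_const_mul _)).tendsto' 0 (p k) ?_).eventually
      (eventually_lt_nhds hk)).filter_mono nhdsWithin_le_nhds
    simp
  filter_upwards [hja, hscale.eventually hkb, self_mem_nhdsWithin, hj', hk'] with
    s hsj hsk (hs : 0 ≤ s) hsj' hsk'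
  refine ⟨fun i => ?_, ?_⟩
  · rcases eq_or_ne i k with rfl | hik
    · simp only [update_self]
      constructor <;> nlinarith [(hp.1 i).1]
    rcases eq_or_ne i j with rfl | hij
    · simp only [update_of_ne hik, update_self]
      constructor <;> linarith [(hp.1 i).2]
    · simpa only [update_of_ne hik, update_of_ne hij] using hp.1 i
  · rw [sum_apply_update_update (fun i => gridExchange η (E i)) p hjk, hp.2, hsj, hsk]
    field_simp
    ring

lemma IsLocalMaxOn.hasDerivWithinAt_Ici_nonpos {f : ℝ → ℝ} {f' a : ℝ}
    (h : IsLocalMaxOn f (Set.Ici a) a) (hf : HasDerivWithinAt f f' (Set.Ici a) a) : f' ≤ 0 := by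
  have h1 : (1 : ℝ) ∈ posTangentConeAt (Set.Ici a) a :=
    mem_posTangentConeAt_of_segment_subset (by
      rw [segment_eq_Icc (by linarith)]; exact Set.Icc_subset_Ici_self)
  simpa using h.hasFDerivWithinAt_nonpos hf.hasFDerivWithinAt h1

lemma sq_mul_le_mul_sqrt_of_isMaxOn (hγ : ∀ i, 0 ≤ γ i) (hη : 0 < η) (hη1 : η ≤ 1)
    (hp : p ∈ feasibleSet pmax η E) (hmax : IsMaxOn (weightedSqrtSum γ) (feasibleSet pmax η E) p)
    (hj : 0 < p j) (hk : 0 < p k) (hk' : p k < pmax) :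
    η ^ 2 * (γ k * √(p j)) ≤ γ j * √(p k) := by
  rcases eq_or_ne j k with rfl | hjk
  · rw [mul_comm (γ j)]
    exact mul_le_of_le_one_left (by positivity [hγ j]) (pow_le_one₀ hη.le hη1)
  obtain ⟨c, hc, hfeas⟩ := eventually_exchange_mem_feasibleSet hη hη1 hp hjk hj hk'
  set ψ : ℝ → ℝ := fun s => √(p j - s) * γ j + √(p k + c * s) * γ k
  have hψ : IsLocalMaxOn ψ (Set.Ici 0) 0 := by
    filter_upwards [hfeas] with s hs
    have := isMaxOn_iff.1 hmax _ hs
    unfold weightedSqrtSum at this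
    rw [sum_apply_update_update (fun i t => √t * γ i) p hjk] at this
    simp only [ψ, sub_zero, mul_zero, add_zero]
    linarith
  have hdj : HasDerivAt (fun s => √(p j - s) * γ j) (-1 / (2 * √(p j)) * γ j) 0 := by
    simpa using (((hasDerivAt_id 0).const_sub (p j)).sqrt (by simp; linarith)).mul_const (γ j)
  have hdk : HasDerivAt (fun s => √(p k + c * s) * γ k) (c / (2 * √(p k)) * γ k) 0 := by
    simpa using
      ((((hasDerivAt_id 0).const_mul c).const_add (p k)).sqrt (by simp; linarith)).mul_const (γ k)
  have hmarginal := hψ.hasDerivWithinAt_Ici_nonpos (hdj.add hdk).hasDerivWithinAt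
  have hsj := Real.sqrt_pos.2 hj
  have hsk := Real.sqrt_pos.2 hk
  have hscaled : (-1 / (2 * √(p j)) * γ j + c / (2 * √(p k)) * γ k) * (2 * √(p j) * √(p k)) =
      c * (γ k * √(p j)) - γ j * √(p k) := by
    field_simp
    ring
  have hprod := mul_nonpos_of_nonpos_of_nonneg hmarginal (by positivity : 0 ≤ 2 * √(p j) * √(p k))
  rw [hscaled] at hprod
  calc η ^ 2 * (γ k * √(p j)) ≤ c * (γ k * √(p j)) := by gcongr; positivity [hγ k]
    _ ≤ γ j * √(p k) := by linarith

end

lemma sq_mul_sq_le_of_le_sqrt_div {x γ κ : ℝ} (hx : 0 ≤ x) (hγ : 0 < γ) (hκ : 0 ≤ κ)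
    (h : κ ≤ √x / γ) : γ ^ 2 * κ ^ 2 ≤ x := by
  rw [le_div_iff₀ hγ, Real.le_sqrt (by positivity) hx] at h
  linarith

lemma le_sq_mul_sq_of_sqrt_div_le {x γ κ : ℝ} (hγ : 0 < γ) (h : √x / γ ≤ κ) :
    x ≤ γ ^ 2 * κ ^ 2 := by
  rw [div_le_iff₀ hγ, Real.sqrt_le_iff] at h
  linarith [h.2]

theorem stmt_9_general (N : ℕ) (γ E : Fin N → ℝ) (pmax η : ℝ)
    (hγ : ∀ i, 0 < γ i)
    (hη1 : 0 < η) (hη2 : η < 1)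
    (p : Fin N → ℝ)
    (hfeas : (∀ i, 0 ≤ p i ∧ p i ≤ pmax) ∧
      ∑ i, (η * max (E i - p i) 0 - max (p i - E i) 0 / η) = 0)
    (hopt : ∀ q : Fin N → ℝ,
      (∀ i, 0 ≤ q i ∧ q i ≤ pmax) →
      ∑ i, (η * max (E i - q i) 0 - max (q i - E i) 0 / η) = 0 →
      (∑ i, Real.sqrt (q i) * γ i) ^ 2 ≤ (∑ i, Real.sqrt (p i) * γ i) ^ 2) :
    ∃ μ : ℝ, 0 < μ ∧
      (let κG := (∑ i, Real.sqrt (p i) * γ i) / (μ * η);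
       let κL := η ^ 2 * κG;
       (∀ k, 0 < p k → p k < pmax →
          κL ≤ Real.sqrt (p k) / γ k ∧ Real.sqrt (p k) / γ k ≤ κG) ∧
       (∀ k, 0 < p k → p k < pmax → p k = E k →
          γ k ^ 2 * κL ^ 2 ≤ E k ∧ E k ≤ γ k ^ 2 * κG ^ 2)) := by
  have hγ0 i := (hγ i).le
  have hmax : IsMaxOn (weightedSqrtSum γ) (feasibleSet pmax η E) p := fun q hq =>
    (sq_le_sq₀ (weightedSqrtSum_nonneg hγ0 q) (weightedSqrtSum_nonneg hγ0 p)).1 (hopt q hq.1 hq.2)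
  by_cases hint : ∃ k, 0 < p k ∧ p k < pmax
  swap
  · exact ⟨1, one_pos, fun k h1 h2 => (hint ⟨k, h1, h2⟩).elim,
      fun k h1 h2 _ => (hint ⟨k, h1, h2⟩).elim⟩
  obtain ⟨k₀, hk₀⟩ := hint
  obtain ⟨k₁, hk₁, hk₁max⟩ := (univ.filter fun i => 0 < p i ∧ p i < pmax).exists_max_image
    (fun i => √(p i) / γ i) ⟨k₀, by simpa using hk₀⟩
  simp only [mem_filter, mem_univ, true_and] at hk₁ hk₁max
  have hS : 0 < weightedSqrtSum γ p :=
    sum_pos' (fun i _ => mul_nonneg (Real.sqrt_nonneg _) (hγ0 i))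
      ⟨k₀, mem_univ _, mul_pos (Real.sqrt_pos.2 hk₀.1) (hγ k₀)⟩
  have hr₁ : 0 < √(p k₁) / γ k₁ := div_pos (Real.sqrt_pos.2 hk₁.1) (hγ k₁)
  refine ⟨weightedSqrtSum γ p / (η * (√(p k₁) / γ k₁)), by positivity, ?_⟩
  intro κG κL
  have hκG : κG = √(p k₁) / γ k₁ := by
    change weightedSqrtSum γ p / (weightedSqrtSum γ p / (η * (√(p k₁) / γ k₁)) * η) = _
    field_simp
  have hbounds : ∀ k, 0 < p k → p k < pmax → κL ≤ √(p k) / γ k ∧ √(p k) / γ k ≤ κG := by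
    intro k hk hk'
    refine ⟨?_, hκG ▸ hk₁max k ⟨hk, hk'⟩⟩
    have := sq_mul_le_mul_sqrt_of_isMaxOn hγ0 hη1 hη2.le hfeas hmax hk₁.1 hk hk'
    change η ^ 2 * κG ≤ _
    rw [hκG, ← mul_div_assoc, div_le_div_iff₀ (hγ k₁) (hγ k)]
    linarith
  refine ⟨hbounds, fun k hk hk' hkE => hkE ▸ ⟨?_, ?_⟩⟩
  · exact sq_mul_sq_le_of_le_sqrt_div hk.le (hγ k) (by positivity) (hbounds k hk hk').1
  · exact le_sq_mul_sq_of_sqrt_div_le (hγ k) (hbounds k hk hk').2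

/-- Grid-neutral case: every interior-power RAU satisfies `κ_L ≤ √p*ₖ/γₖ ≤ κ_G`,
and a grid-passive RAU (`p*ₖ = Eₖ`) satisfies `γₖ²κ_L² ≤ Eₖ ≤ γₖ²κ_G²`. -/
theorem stmt_9 (N : ℕ) (γ E : Fin N → ℝ) (pmax η : ℝ)
    (hγ : ∀ i, 0 < γ i) (hE : ∀ i, 0 < E i) (hpmax : 0 < pmax)
    (hη1 : 0 < η) (hη2 : η < 1)
    (p : Fin N → ℝ)
    (hfeas : (∀ i, 0 ≤ p i ∧ p i ≤ pmax) ∧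
      ∑ i, (η * max (E i - p i) 0 - max (p i - E i) 0 / η) = 0)
    (hopt : ∀ q : Fin N → ℝ,
      (∀ i, 0 ≤ q i ∧ q i ≤ pmax) →
      ∑ i, (η * max (E i - q i) 0 - max (q i - E i) 0 / η) = 0 →
      (∑ i, Real.sqrt (q i) * γ i) ^ 2 ≤ (∑ i, Real.sqrt (p i) * γ i) ^ 2) :
    ∃ μ : ℝ, 0 < μ ∧
      (let κG := (∑ i, Real.sqrt (p i) * γ i) / (μ * η);
       let κL := η ^ 2 * κG;
       (∀ k, 0 < p k → p k < pmax →
          κL ≤ Real.sqrt (p k) / γ k ∧ Real.sqrt (p k) / γ k ≤ κG) ∧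
       (∀ k, 0 < p k → p k < pmax → p k = E k →
          γ k ^ 2 * κL ^ 2 ≤ E k ∧ E k ≤ γ k ^ 2 * κG ^ 2)) :=
  stmt_9_general N γ E pmax η hγ hη1 hη2 p hfeas hopt
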